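/- Let S be a finite alphabet, Q : S → ℝ a probability distribution with Q(x) > 0 for all x, and R ∈ ℝ. For λ > −1 and k = 0, 1, 2 define Z_k(λ) = ∑_{x∈S} Q(x)^{1/(1+λ)} (ln Q(x))^k, and let γ(λ) = λR − (1+λ) ln Z_0(λ). Then γ is twice differentiable on (−1, ∞) with γ''(λ) = −( Z_0(λ) Z_2(λ) − Z_1(λ)² ) / ( (1+λ)³ Z_0(λ)² ), and γ''(λ) ≤ 0 for all λ > −1. -/

import Mathlib

/-!
Differentiating `Q x ^ (1 / (1 + λ))` in `λ` brings down a factor `-log (Q x) / (1 + λ)²`,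
so `Z_k' = -Z_{k+1} / (1 + λ)²`. Hence `γ' = R - log Z₀ + Z₁ / ((1 + λ) Z₀)`, and differentiating
once more gives the stated formula for `γ''`. Its sign is that of `Z₁² - Z₀ Z₂`, which is
nonpositive by Cauchy–Schwarz for the weights `Q x ^ (1 / (1 + λ))`.
-/

open Real Finset

section

variable {S : Type*} [Fintype S]

noncomputable def tiltedMoment (Q : S → ℝ) (k : ℕ) (l : ℝ) : ℝ :=
  ∑ x, Q x ^ (1 / (1 + l)) * log (Q x) ^ k

noncomputable def errorExponent (Q : S → ℝ) (R l : ℝ) : ℝ :=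
  l * R - (1 + l) * log (tiltedMoment Q 0 l)

lemma hasDerivAt_rpow_one_div_one_add {q l : ℝ} (hq : 0 < q) (hl : 1 + l ≠ 0) :
    HasDerivAt (fun m : ℝ => q ^ (1 / (1 + m))) (-(q ^ (1 / (1 + l)) * log q) / (1 + l) ^ 2) l := by
  have hinv : HasDerivAt (fun m : ℝ => 1 / (1 + m)) (-1 / (1 + l) ^ 2) l := by
    simpa [one_div] using ((hasDerivAt_id' l).const_add 1).fun_inv hl
  convert hinv.const_rpow hq using 1
  ring

lemma hasDerivAt_tiltedMoment {Q : S → ℝ} (hQ : ∀ x, 0 < Q x) (k : ℕ) {l : ℝ} (hl : 1 + l ≠ 0) :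
    HasDerivAt (tiltedMoment Q k) (-tiltedMoment Q (k + 1) l / (1 + l) ^ 2) l := by
  refine (HasDerivAt.fun_sum (u := univ) fun x _ =>
    (hasDerivAt_rpow_one_div_one_add (hQ x) hl).mul_const (log (Q x) ^ k)).congr_deriv ?_
  simp only [tiltedMoment, neg_div, ← sum_neg_distrib, sum_div, pow_succ]
  refine sum_congr rfl fun x _ => ?_
  ring

lemma tiltedMoment_zero_pos [Nonempty S] {Q : S → ℝ} (hQ : ∀ x, 0 < Q x) (l : ℝ) :
    0 < tiltedMoment Q 0 l := by
  unfold tiltedMoment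
  exact sum_pos (fun x _ => by simpa using rpow_pos_of_pos (hQ x) _) univ_nonempty

lemma sq_tiltedMoment_one_le {Q : S → ℝ} (hQ : ∀ x, 0 ≤ Q x) (l : ℝ) :
    tiltedMoment Q 1 l ^ 2 ≤ tiltedMoment Q 0 l * tiltedMoment Q 2 l := by
  have hw : ∀ x, 0 ≤ Q x ^ (1 / (1 + l)) := fun x => rpow_nonneg (hQ x) _
  simpa [tiltedMoment] using sum_sq_le_sum_mul_sum_of_sq_le_mul univ
    (r := fun x => Q x ^ (1 / (1 + l)) * log (Q x)) (fun x _ => hw x)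
    (fun x _ => mul_nonneg (hw x) (sq_nonneg (log (Q x)))) (fun x _ => le_of_eq (by ring))

lemma hasDerivAt_errorExponent [Nonempty S] {Q : S → ℝ} (hQ : ∀ x, 0 < Q x) (R : ℝ) {l : ℝ}
    (hl : 1 + l ≠ 0) :
    HasDerivAt (errorExponent Q R)
      (R - log (tiltedMoment Q 0 l) + tiltedMoment Q 1 l / ((1 + l) * tiltedMoment Q 0 l)) l := by
  have hZ₀ := (tiltedMoment_zero_pos hQ l).ne'
  have hlog := (hasDerivAt_tiltedMoment hQ 0 hl).log hZ₀
  refine (((hasDerivAt_id' l).mul_const R).fun_sub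
    (((hasDerivAt_id' l).const_add 1).fun_mul hlog)).congr_deriv ?_
  field_simp
  ring

lemma hasDerivAt_deriv_errorExponent [Nonempty S] {Q : S → ℝ} (hQ : ∀ x, 0 < Q x) (R : ℝ)
    {l : ℝ} (hl : 1 + l ≠ 0) :
    HasDerivAt (deriv (errorExponent Q R))
      (-(tiltedMoment Q 0 l * tiltedMoment Q 2 l - tiltedMoment Q 1 l ^ 2) /
        ((1 + l) ^ 3 * tiltedMoment Q 0 l ^ 2)) l := by
  have hderiv : deriv (errorExponent Q R) =ᶠ[nhds l] fun m => R - log (tiltedMoment Q 0 m) +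
      tiltedMoment Q 1 m / ((1 + m) * tiltedMoment Q 0 m) := by
    filter_upwards [(continuous_const.add continuous_id).continuousAt.eventually_ne hl] with m hm
    exact (hasDerivAt_errorExponent hQ R hm).deriv
  rw [hderiv.hasDerivAt_iff]
  have hZ₀ := (tiltedMoment_zero_pos hQ l).ne'
  have hZ₀' := hasDerivAt_tiltedMoment hQ 0 hl
  have hZ₁' := hasDerivAt_tiltedMoment hQ 1 hl
  have hden := ((hasDerivAt_id' l).const_add 1).fun_mul hZ₀'
  refine (((hasDerivAt_const l R).fun_sub (hZ₀'.log hZ₀)).fun_add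
    (hZ₁'.fun_div hden (mul_ne_zero hl hZ₀))).congr_deriv ?_
  field_simp
  ring

end

/-- For `γ(λ) = λR - (1+λ) ln Z₀(λ)` with
`Z_k(λ) = ∑ Q(x)^{1/(1+λ)} (ln Q(x))^k`, the function `γ` is twice differentiable
on `(-1, ∞)` with `γ''(λ) = -(Z₀Z₂ - Z₁²)/((1+λ)³ Z₀²) ≤ 0`. -/
theorem second_deriv_error_exponent (S : Type*) [Fintype S]
    (Q : S → ℝ) (hQpos : ∀ x, 0 < Q x) (hQsum : ∑ x, Q x = 1) (R : ℝ)
    (Z : ℕ → ℝ → ℝ)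
    (hZ : ∀ k l, Z k l = ∑ x, Q x ^ (1 / (1 + l)) * (Real.log (Q x)) ^ k)
    (γ : ℝ → ℝ)
    (hγ : ∀ l, γ l = l * R - (1 + l) * Real.log (Z 0 l)) :
    ∀ l : ℝ, -1 < l →
      HasDerivAt (deriv γ)
          (-(Z 0 l * Z 2 l - Z 1 l ^ 2) / ((1 + l) ^ 3 * Z 0 l ^ 2)) l ∧
        -(Z 0 l * Z 2 l - Z 1 l ^ 2) / ((1 + l) ^ 3 * Z 0 l ^ 2) ≤ 0 := by
  obtain rfl : Z = tiltedMoment Q := funext₂ hZ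
  obtain rfl : γ = errorExponent Q R := funext hγ
  have : Nonempty S := by
    by_contra h
    simp [not_nonempty_iff.mp h] at hQsum
  intro l hl
  have hl₀ : 0 < 1 + l := by linarith
  refine ⟨hasDerivAt_deriv_errorExponent hQpos R hl₀.ne', ?_⟩
  have hZ₀ := tiltedMoment_zero_pos hQpos l
  rw [neg_div, neg_nonpos]
  exact div_nonneg (sub_nonneg.mpr (sq_tiltedMoment_one_le (fun x => (hQpos x).le) l))
    (by positivity)
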